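/- arXiv:1108.5212 — 3 statements merged into one kernel-verified Lean document; each statement's English description precedes it below -/
import Mathlib

section
/- The number of free statistical parameters of an IMP model satisfies κ_I(Π, k) ≤ κ(Π, k), i.e., Σ_{i=1}^m α_i^{k_i}(α_i − 1) + (m − 1) m^{k_S} ≤ (α − 1) m^{k_S} Π_{i=1}^m α_i^{k_i}, where α = Σ_{i=1}^m α_i, for all positive integers m, α_1,…,α_m ≥ 1 and nonnegative integers k_1,…,k_m, k_S. -/
/-! Every `α_i ^ k_i` is at most `P = ∏ j, α_j ^ k_j`, so the first sum is at most
`P (α - m)`. As `P ≥ 1` and `m ^ k_S ≥ 1`, the whole left side is then at most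
`(α - m + (m - 1)) m ^ k_S P = (α - 1) m ^ k_S P`. -/

open Finset

section
variable {ι : Type*} [Fintype ι]

theorem card_le_sum_of_one_le {α : ι → ℕ} (hα : ∀ i, 1 ≤ α i) : Fintype.card ι ≤ ∑ i, α i := by
  simpa using card_nsmul_le_sum univ α 1 fun i _ => hα i

theorem sum_pow_mul_pred_le {α : ι → ℕ} (hα : ∀ i, 1 ≤ α i) (k : ι → ℕ) :
    ∑ i, α i ^ k i * (α i - 1) ≤ (∏ i, α i ^ k i) * (∑ i, α i - Fintype.card ι) := by
  have hpow : ∀ i, 1 ≤ α i ^ k i := fun i => Nat.one_le_pow _ _ (hα i)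
  calc ∑ i, α i ^ k i * (α i - 1) ≤ ∑ i, (∏ j, α j ^ k j) * (α i - 1) := by
        gcongr with i
        exact single_le_prod' (fun j _ => hpow j) (mem_univ i)
    _ = (∏ i, α i ^ k i) * (∑ i, α i - Fintype.card ι) := by
        rw [← mul_sum, sum_tsub_distrib _ fun i _ => hα i]
        simp

end

theorem mul_add_mul_le_add_mul_mul {a b M P : ℕ} (hM : 1 ≤ M) (hP : 1 ≤ P) :
    P * a + b * M ≤ (a + b) * M * P :=
  calc P * a + b * M ≤ a * M * P + b * M * P := by
        refine add_le_add ?_ (Nat.le_mul_of_pos_right _ hP)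
        rw [mul_comm P, mul_assoc]
        exact Nat.mul_le_mul_left a (Nat.le_mul_of_pos_left P hM)
    _ = (a + b) * M * P := by ring

/-- The number of free statistical parameters of the IMP-constrained FSM source is at most
that of the unconstrained FSM source on the same FSM:
`Σ_i α_i^{k_i}(α_i − 1) + (m − 1) m^{k_S} ≤ (α − 1) m^{k_S} Π_i α_i^{k_i}`,
where `α = Σ_i α_i`. -/
theorem imp_param_count_le (m : ℕ) (hm : 1 ≤ m) (α : Fin m → ℕ) (hα : ∀ i, 1 ≤ α i)
    (k : Fin m → ℕ) (kS : ℕ) :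
    (∑ i, (α i) ^ (k i) * (α i - 1)) + (m - 1) * m ^ kS ≤
      ((∑ i, α i) - 1) * m ^ kS * ∏ i, (α i) ^ (k i) := by
  have hP : 1 ≤ ∏ i, α i ^ k i := one_le_prod' fun i _ => Nat.one_le_pow _ _ (hα i)
  have hm_le : m ≤ ∑ i, α i := by simpa using card_le_sum_of_one_le hα
  have hsplit : ∑ i, α i - 1 = (∑ i, α i - m) + (m - 1) := by omega
  calc _ ≤ (∏ i, α i ^ k i) * (∑ i, α i - m) + (m - 1) * m ^ kS := by
        gcongr
        simpa using sum_pow_mul_pred_le hα k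
    _ ≤ _ := by
        rw [hsplit]
        exact mul_add_mul_le_add_mul_mul (Nat.one_le_pow _ _ hm) hP
end

section
/- For all integers m ≥ 2, k ≥ 1, and β > 3, the exponent 2(m−1)^k + ((m+1)^k − (m−1)^k)(m+1) − β(m(m+1)^k − (m−1)m^k − 1) is strictly less than −1. -/
/-- Key inequality: for real `x ≥ 2` and `k ≥ 1`,
`3(x-1)x^k + 4 ≤ (2x-1)(x+1)^k + (x-1)^(k+1)`. -/
lemma key_ineq (x : ℝ) (hx : 2 ≤ x) :
    ∀ k : ℕ, 1 ≤ k → 3 * (x - 1) * x ^ k + 4 ≤ (2 * x - 1) * (x + 1) ^ k + (x - 1) ^ (k + 1) := by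
  intro k hk
  induction k with
  | zero => omega
  | succ n ih =>
    rcases Nat.eq_or_lt_of_le hk with h1 | h1
    · -- n + 1 = 1, i.e. n = 0
      have hn : n = 0 := by omega
      subst hn
      simp only [pow_succ, pow_zero, one_mul, pow_one]
      nlinarith [sq_nonneg (x - 2)]
    · have hn : 1 ≤ n := by omega
      have IH := ih hn
      have hAB : (x - 1) ^ (n + 1) ≤ (2 * x - 1) * (x + 1) ^ n := by
        have h1 : (x - 1) ^ n ≤ (x + 1) ^ n := by
          apply pow_le_pow_left₀ (by linarith) (by linarith)
        have h2 : (0:ℝ) ≤ (x - 1) ^ n := pow_nonneg (by linarith) n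
        have h3 : (0:ℝ) ≤ (x + 1) ^ n := by positivity
        calc (x - 1) ^ (n + 1) = (x - 1) * (x - 1) ^ n := by ring
          _ ≤ (2 * x - 1) * (x + 1) ^ n := by nlinarith
      have hxpos : (0:ℝ) < x := by linarith
      have expand1 : x ^ (n + 1) = x * x ^ n := by ring
      have expand2 : (x + 1) ^ (n + 1) = (x + 1) * (x + 1) ^ n := by ring
      have expand3 : (x - 1) ^ (n + 2) = (x - 1) * (x - 1) ^ (n + 1) := by ring
      nlinarith [mul_le_mul_of_nonneg_left IH (le_of_lt hxpos)]

/-- For all integers `m ≥ 2`, `k ≥ 1`, and reals `β > 3`, the exponent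
`2(m−1)^k + ((m+1)^k − (m−1)^k)(m+1) − β(m(m+1)^k − (m−1)m^k − 1)` is strictly
less than `−1`. -/
theorem error_exponent_lt_neg_one (m k : ℕ) (hm : 2 ≤ m) (hk : 1 ≤ k) (β : ℝ) (hβ : 3 < β) :
    2 * ((m : ℝ) - 1) ^ k + (((m : ℝ) + 1) ^ k - ((m : ℝ) - 1) ^ k) * ((m : ℝ) + 1)
      - β * ((m : ℝ) * ((m : ℝ) + 1) ^ k - ((m : ℝ) - 1) * (m : ℝ) ^ k - 1) < -1 := by
  set x : ℝ := (m : ℝ) with hxdef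
  have hx : 2 ≤ x := by
    simpa [hxdef] using (by exact_mod_cast hm : (2:ℝ) ≤ (m:ℝ))
  have hkey := key_ineq x hx k hk
  have hD : 0 < x * (x + 1) ^ k - (x - 1) * x ^ k - 1 := by
    have h1 : x ^ k ≤ (x + 1) ^ k := by
      apply pow_le_pow_left₀ (by linarith) (by linarith)
    have h2 : (2:ℝ) ≤ x ^ k := by
      calc (2:ℝ) = 2 ^ 1 := by norm_num
        _ ≤ 2 ^ k := by apply pow_le_pow_right₀ (by norm_num) hk
        _ ≤ x ^ k := by apply pow_le_pow_left₀ (by norm_num) hx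
    nlinarith
  have hβD : 3 * (x * (x + 1) ^ k - (x - 1) * x ^ k - 1)
      < β * (x * (x + 1) ^ k - (x - 1) * x ^ k - 1) :=
    (mul_lt_mul_of_pos_right hβ hD)
  have h1k : (0:ℝ) ≤ (x - 1) ^ k := pow_nonneg (by linarith) k
  have hexp : (x - 1) ^ (k + 1) = (x - 1) * (x - 1) ^ k := by ring
  nlinarith
end

section
/- (Splitting direction of Lemma 3, induction step) With the setup of the interleaved product formula, suppose P = ∫_Π(P_1, …, P_m; P_S) with P_1 memoryless over A_1 = B_1 ∪ B_2, and define P′ = ∫_{Π′}(Q_1, Q_2, P_2, …, P_m; P_S′) where Q_j(b) = P_1(b)/P_1(B_j) for b ∈ B_j, and P_S′(A | s′) = P_S(A | ψ(s′)) for A = A_i (i ≥ 2), and P_S′(B_j | s′) = P_S(A_1 | ψ(s′)) · P_1(B_j) for j = 1, 2, where ψ replaces occurrences of B_1, B_2 by A_1 in states. Then P(u^n) = P′(u^n) for every n ≥ 0 and every string u^n over A. -/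
/-!
Unrolling the recursion for `P_S′` gives the closed form `P_S′(s′) = P_S(ψ s′) · ∏ w(s′)`, where
`w(B_j) = P₁(B_j)` and `w(A_i) = 1`. Hence a step of `P′` is the corresponding step of `P`, except
that a symbol `a ∈ B_j` is charged `P_S(A₁ | ·) · P₁(B_j)` by the switch and `p(a) / P₁(B_j)` by
`Q_j`, whose product is exactly what `P` charges it. The step factors only have to agree where
`P` does not vanish, and there every symbol of `A₁` read so far has `p ≠ 0`, so the memoryless
ratios really are `p(a)` and `p(a) / P₁(B_j)` rather than `0 / 0`.
-/

-- Since `x / 0 = 0`, this is `0` after a null prefix `l`.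
noncomputable def condRatio {β : Type*} (f : List β → ℝ) (l : List β) (b : β) : ℝ :=
  f (l ++ [b]) / f l

theorem condRatio_eq_of_forall_ne_zero {β : Type*} {f : List β → ℝ} {g : β → ℝ}
    (hf : ∀ l, f l = (l.map g).prod) {l : List β} (hl : ∀ x ∈ l, g x ≠ 0) (b : β) :
    condRatio f l b = g b := by
  have hprod : (l.map g).prod ≠ 0 := List.prod_ne_zero (by simpa using hl)
  simp only [condRatio, hf, List.map_append, List.prod_append, List.map_singleton,
    List.prod_singleton]
  exact mul_div_cancel_left₀ _ hprod

theorem eq_of_step_factors_eq {α : Type*} {f g : List α → ℝ} {r s : List α → α → ℝ}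
    (h0 : f [] = g []) (hf : ∀ u a, f (u ++ [a]) = f u * r u a)
    (hg : ∀ u a, g (u ++ [a]) = g u * s u a) (hrs : ∀ u a, f u ≠ 0 → r u a = s u a) :
    ∀ u, f u = g u := by
  intro u
  induction u using List.reverseRecOn with
  | nil => exact h0
  | append_singleton u a ih =>
    rw [hf, hg, ← ih]
    rcases eq_or_ne (f u) 0 with hu | hu
    · simp [hu]
    · rw [hrs u a hu]

section Switch

variable {ι ι' : Type*} {PS : List ι → ℝ}

theorem append_eq_zero_of_eq_zero [Fintype ι] (hnn : ∀ U, 0 ≤ PS U)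
    (hadd : ∀ U, ∑ i, PS (U ++ [i]) = PS U) {S : List ι} (hS : PS S = 0) (i : ι) :
    PS (S ++ [i]) = 0 := by
  refine le_antisymm ?_ (hnn _)
  calc PS (S ++ [i]) ≤ ∑ j, PS (S ++ [j]) :=
        Finset.single_le_sum (fun j _ => hnn (S ++ [j])) (Finset.mem_univ i)
    _ = 0 := by rw [hadd, hS]

variable [Fintype ι] {PS' : List ι' → ℝ} (ψ : ι' → ι) (w : ι' → ℝ)

theorem eq_mul_prod_of_condRatio (hnn : ∀ U, 0 ≤ PS U) (hadd : ∀ U, ∑ i, PS (U ++ [i]) = PS U)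
    (hPS0 : PS [] = 1) (hPS'0 : PS' [] = 1)
    (hPS' : ∀ S' j', PS' (S' ++ [j']) = PS' S' * condRatio PS (S'.map ψ) (ψ j') * w j')
    (S' : List ι') : PS' S' = PS (S'.map ψ) * (S'.map w).prod := by
  induction S' using List.reverseRecOn with
  | nil => simp [hPS0, hPS'0]
  | append_singleton S' j' ih =>
    rw [hPS', ih]
    simp only [condRatio, List.map_append, List.map_singleton, List.prod_append,
      List.prod_singleton]
    rcases eq_or_ne (PS (S'.map ψ)) 0 with h0 | h0
    · rw [h0, append_eq_zero_of_eq_zero hnn hadd h0]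
      ring
    · field_simp

theorem condRatio_eq_condRatio_map_mul (hnn : ∀ U, 0 ≤ PS U)
    (hadd : ∀ U, ∑ i, PS (U ++ [i]) = PS U) (hPS0 : PS [] = 1) (hPS'0 : PS' [] = 1)
    (hPS' : ∀ S' j', PS' (S' ++ [j']) = PS' S' * condRatio PS (S'.map ψ) (ψ j') * w j')
    (hw : ∀ j', w j' ≠ 0) (S' : List ι') (j' : ι') :
    condRatio PS' S' j' = condRatio PS (S'.map ψ) (ψ j') * w j' := by
  have hW : (S'.map w).prod ≠ 0 := List.prod_ne_zero (by simpa using fun j' _ => hw j')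
  simp only [condRatio, eq_mul_prod_of_condRatio ψ w hnn hadd hPS0 hPS'0 hPS',
    List.map_append, List.map_singleton, List.prod_append, List.prod_singleton]
  rw [← mul_assoc, mul_right_comm _ _ (w j'), mul_div_mul_right _ _ hW, mul_div_right_comm]

end Switch

section Components

variable {α ι ι' : Type*} [DecidableEq ι] [DecidableEq ι'] {part : α → ι} {part' : α → ι'}
  {ψ : ι' → ι} {Pc : ι → List α → ℝ} {Q : ι' → List α → ℝ} {p : α → ℝ} {i₁ : ι}
  {u : List α} {a : α}

theorem eq_zero_of_mem_of_prob_eq_zero {PS : List ι → ℝ} {Pr : List α → ℝ}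
    (hPc₁ : ∀ l, Pc i₁ l = (l.map p).prod)
    (hPr : ∀ u a, Pr (u ++ [a]) = Pr u * condRatio PS (u.map part) (part a) *
      condRatio (Pc (part a)) (u.filter (part · = part a)) a)
    {x : α} (hx : x ∈ u) (hxi : part x = i₁) (hpx : p x = 0) : Pr u = 0 := by
  induction u using List.reverseRecOn with
  | nil => simp at hx
  | append_singleton u a ih =>
    rw [hPr]
    rcases List.mem_append.1 hx with hx | hx
    · rw [ih hx, zero_mul, zero_mul]
    · obtain rfl := List.mem_singleton.1 hx
      simp [condRatio, hxi, hPc₁, hpx]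

theorem condRatio_memoryless_eq_mul_condRatio {c : ℝ} (hcompat : ∀ a, ψ (part' a) = part a)
    (hPc₁ : ∀ l, Pc i₁ l = (l.map p).prod) (hQ : ∀ l, Q (part' a) l = (l.map (p · / c)).prod)
    (hc : c ≠ 0) (ha : part a = i₁) (hu : ∀ x ∈ u, part x = i₁ → p x ≠ 0) :
    condRatio (Pc (part a)) (u.filter (part · = part a)) a =
      c * condRatio (Q (part' a)) (u.filter (part' · = part' a)) a := by
  rw [ha, condRatio_eq_of_forall_ne_zero hPc₁, condRatio_eq_of_forall_ne_zero hQ,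
    mul_div_cancel₀ _ hc]
  · intro x hx
    obtain ⟨hxu, hxa⟩ := List.mem_filter.1 hx
    have hxi : part x = i₁ := by rw [← hcompat, of_decide_eq_true hxa, hcompat, ha]
    exact div_ne_zero (hu x hxu hxi) hc
  · intro x hx
    obtain ⟨hxu, hxi⟩ := List.mem_filter.1 hx
    exact hu x hxu (of_decide_eq_true hxi)

theorem condRatio_eq_of_fiber_singleton (hcompat : ∀ a, ψ (part' a) = part a)
    (hfiber : ∀ j, ψ j = ψ (part' a) → j = part' a) (hQ : Q (part' a) = Pc (part a)) :
    condRatio (Q (part' a)) (u.filter (part' · = part' a)) a =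
      condRatio (Pc (part a)) (u.filter (part · = part a)) a := by
  have hfilter : u.filter (part' · = part' a) = u.filter (part · = part a) := by
    refine List.filter_congr fun x _ => decide_eq_decide.2 ⟨fun h => ?_, fun h => ?_⟩
    · rw [← hcompat, h, hcompat]
    · exact hfiber _ (by rw [hcompat, hcompat, h])
  rw [hQ, hfilter]

end Components

theorem memoryless_splitting_IMP_general
    {α ι ι' : Type*} [Fintype ι] [DecidableEq ι]
    [DecidableEq ι']
    (part : α → ι) (part' : α → ι') (ψ : ι' → ι)
    (hcompat : ∀ a, ψ (part' a) = part a)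
    (i₁ : ι) (b₁ b₂ : ι')
    (hψb₁ : ψ b₁ = i₁) (hψb₂ : ψ b₂ = i₁)
    (hinj : ∀ j' j'', j' ≠ b₁ → j' ≠ b₂ → ψ j'' = ψ j' → j'' = j')
    -- the memoryless component `P₁` over `A₁`, with single-symbol probabilities `p`
    (p : α → ℝ)
    (p₁ p₂ : ℝ)
    (hp₁pos : 0 < p₁) (hp₂pos : 0 < p₂)
    (Pc : ι → List α → ℝ) (hPc₁ : ∀ u : List α, Pc i₁ u = (u.map p).prod)
    (Q : ι' → List α → ℝ)
    (hQ₁ : ∀ u : List α, Q b₁ u = (u.map (fun a => p a / p₁)).prod)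
    (hQ₂ : ∀ u : List α, Q b₂ u = (u.map (fun a => p a / p₂)).prod)
    (hQother : ∀ j', j' ≠ b₁ → j' ≠ b₂ → Q j' = Pc (ψ j'))
    (PS : List ι → ℝ) (PS' : List ι' → ℝ)
    (hPS0 : PS [] = 1) (hPS'0 : PS' [] = 1)
    (hPSnn : ∀ U, 0 ≤ PS U)
    (hPSadd : ∀ U : List ι, ∑ i, PS (U ++ [i]) = PS U)
    (hPS' : ∀ (S' : List ι') (j' : ι'),
      PS' (S' ++ [j']) = PS' S' * (PS (S'.map ψ ++ [ψ j']) / PS (S'.map ψ)) *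
        (if j' = b₁ then p₁ else if j' = b₂ then p₂ else 1))
    (Pr Pr' : List α → ℝ) (hPr0 : Pr [] = 1) (hPr'0 : Pr' [] = 1)
    (hPr : ∀ (u : List α) (a : α),
      Pr (u ++ [a]) = Pr u * (PS (u.map part ++ [part a]) / PS (u.map part)) *
        (Pc (part a) (u.filter (fun x => decide (part x = part a)) ++ [a]) /
          Pc (part a) (u.filter (fun x => decide (part x = part a)))))
    (hPr' : ∀ (u : List α) (a : α),
      Pr' (u ++ [a]) = Pr' u * (PS' (u.map part' ++ [part' a]) / PS' (u.map part')) *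
        (Q (part' a) (u.filter (fun x => decide (part' x = part' a)) ++ [a]) /
          Q (part' a) (u.filter (fun x => decide (part' x = part' a))))) :
    ∀ u : List α, Pr u = Pr' u := by
  have hw : ∀ j' : ι', (if j' = b₁ then p₁ else if j' = b₂ then p₂ else 1) ≠ 0 := by
    intro j'
    split_ifs <;> positivity
  refine eq_of_step_factors_eq (hPr0.trans hPr'0.symm)
    (r := fun u a => condRatio PS (u.map part) (part a) *
      condRatio (Pc (part a)) (u.filter (part · = part a)) a)
    (s := fun u a => condRatio PS' (u.map part') (part' a) *
      condRatio (Q (part' a)) (u.filter (part' · = part' a)) a)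
    (fun u a => (hPr u a).trans (mul_assoc ..)) (fun u a => (hPr' u a).trans (mul_assoc ..))
    fun u a hu => ?_
  have hsupp : ∀ x ∈ u, part x = i₁ → p x ≠ 0 := fun x hx hxi hpx =>
    hu (eq_zero_of_mem_of_prob_eq_zero hPc₁ hPr hx hxi hpx)
  have hmap : (u.map part').map ψ = u.map part := by simp [Function.comp_def, hcompat]
  rw [condRatio_eq_condRatio_map_mul ψ _ hPSnn hPSadd hPS0 hPS'0 hPS' hw, hmap, hcompat,
    mul_assoc]
  congr 1
  by_cases h₁ : part' a = b₁
  · rw [if_pos h₁]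
    exact condRatio_memoryless_eq_mul_condRatio hcompat hPc₁ (h₁ ▸ hQ₁) hp₁pos.ne'
      (by rw [← hcompat, h₁, hψb₁]) hsupp
  by_cases h₂ : part' a = b₂
  · rw [if_neg h₁, if_pos h₂]
    exact condRatio_memoryless_eq_mul_condRatio hcompat hPc₁ (h₂ ▸ hQ₂) hp₂pos.ne'
      (by rw [← hcompat, h₂, hψb₂]) hsupp
  · rw [if_neg h₁, if_neg h₂, one_mul, condRatio_eq_of_fiber_singleton hcompat
      (fun j hj => hinj _ j h₁ h₂ hj) (by rw [hQother _ h₁ h₂, hcompat])]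

/-- Splitting direction of Lemma 3: interleaving with a memoryless component `P₁` over
`A₁ = B₁ ∪ B₂` yields the same process as the refined interleaving in which `A₁` is split
into `B₁, B₂` with renormalized memoryless components `Q_j(b) = P₁(b)/P₁(B_j)` and refined
switch `P_S′(A|s′) = P_S(A|ψ(s′))` for `A = A_i` (`i ≥ 2`) and
`P_S′(B_j|s′) = P_S(A₁|ψ(s′))·P₁(B_j)`: the two recursively defined interleaved
probability assignments `Pr` and `Pr'` agree on every string. -/
theorem memoryless_splitting_IMP
    {α ι ι' : Type*} [Fintype α] [DecidableEq α] [Fintype ι] [DecidableEq ι]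
    [Fintype ι'] [DecidableEq ι']
    (part : α → ι) (part' : α → ι') (ψ : ι' → ι)
    (hcompat : ∀ a, ψ (part' a) = part a)
    (i₁ : ι) (b₁ b₂ : ι') (hb : b₁ ≠ b₂)
    (hψb₁ : ψ b₁ = i₁) (hψb₂ : ψ b₂ = i₁)
    (hfiber : ∀ j', ψ j' = i₁ → j' = b₁ ∨ j' = b₂)
    (hinj : ∀ j' j'', j' ≠ b₁ → j' ≠ b₂ → ψ j'' = ψ j' → j'' = j')
    -- the memoryless component `P₁` over `A₁`, with single-symbol probabilities `p`
    (p : α → ℝ) (hpnn : ∀ a, 0 ≤ p a)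
    (p₁ p₂ : ℝ)
    (hp₁ : p₁ = ∑ a ∈ Finset.univ.filter (fun a => part' a = b₁), p a)
    (hp₂ : p₂ = ∑ a ∈ Finset.univ.filter (fun a => part' a = b₂), p a)
    (hp₁pos : 0 < p₁) (hp₂pos : 0 < p₂) (hp₁₂ : p₁ + p₂ = 1)
    (Pc : ι → List α → ℝ) (hPc₁ : ∀ u : List α, Pc i₁ u = (u.map p).prod)
    (Q : ι' → List α → ℝ)
    (hQ₁ : ∀ u : List α, Q b₁ u = (u.map (fun a => p a / p₁)).prod)
    (hQ₂ : ∀ u : List α, Q b₂ u = (u.map (fun a => p a / p₂)).prod)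
    (hQother : ∀ j', j' ≠ b₁ → j' ≠ b₂ → Q j' = Pc (ψ j'))
    (PS : List ι → ℝ) (PS' : List ι' → ℝ)
    (hPS0 : PS [] = 1) (hPS'0 : PS' [] = 1)
    (hPSnn : ∀ U, 0 ≤ PS U)
    (hPSadd : ∀ U : List ι, ∑ i, PS (U ++ [i]) = PS U)
    (hPS' : ∀ (S' : List ι') (j' : ι'),
      PS' (S' ++ [j']) = PS' S' * (PS (S'.map ψ ++ [ψ j']) / PS (S'.map ψ)) *
        (if j' = b₁ then p₁ else if j' = b₂ then p₂ else 1))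
    (Pr Pr' : List α → ℝ) (hPr0 : Pr [] = 1) (hPr'0 : Pr' [] = 1)
    (hPr : ∀ (u : List α) (a : α),
      Pr (u ++ [a]) = Pr u * (PS (u.map part ++ [part a]) / PS (u.map part)) *
        (Pc (part a) (u.filter (fun x => decide (part x = part a)) ++ [a]) /
          Pc (part a) (u.filter (fun x => decide (part x = part a)))))
    (hPr' : ∀ (u : List α) (a : α),
      Pr' (u ++ [a]) = Pr' u * (PS' (u.map part' ++ [part' a]) / PS' (u.map part')) *
        (Q (part' a) (u.filter (fun x => decide (part' x = part' a)) ++ [a]) /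
          Q (part' a) (u.filter (fun x => decide (part' x = part' a))))) :
    ∀ u : List α, Pr u = Pr' u :=
  memoryless_splitting_IMP_general part part' ψ hcompat i₁ b₁ b₂ hψb₁ hψb₂ hinj p p₁ p₂ hp₁pos
    hp₂pos Pc hPc₁ Q hQ₁ hQ₂ hQother PS PS' hPS0 hPS'0 hPSnn hPSadd hPS' Pr Pr' hPr0 hPr'0 hPr hPr'
end
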